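/- Let 1 ≤ i < j ≤ n and let a, t₁, t₂ ∈ K be nonzero. Then w_{L_i+L_j}(a,0) · w_{L_i-L_j}(t₁,t₂) · w_{L_i+L_j}(a,0)⁻¹ = w_{−2L_j}(−a⁻¹t₁) · w_{2L_i}(a t₂). -/

import Mathlib

open Matrix

noncomputable section

/- Throughout, `K` is ℝ or ℂ, encoded by the `RCLike` class. -/

/-- 2n×2n matrices over K. -/
abbrev MK (n : ℕ) (K : Type) [RCLike K] : Type := Matrix (Fin (2 * n)) (Fin (2 * n)) K

/-- `EK n K k l` is the elementary matrix with (k,l) entry 1 and all other entries 0. -/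
def EK (n : ℕ) (K : Type) [RCLike K] (k l : Fin (2 * n)) : MK n K :=
  Matrix.single k l 1

/-- the index `i` (1 ≤ i ≤ n, 0-based) inside {1,…,2n}. -/
def lo {n : ℕ} (i : Fin n) : Fin (2 * n) := ⟨i.1, by have := i.isLt; omega⟩

/-- the index `i + n` (1 ≤ i ≤ n, 0-based) inside {1,…,2n}. -/
def hi {n : ℕ} (i : Fin n) : Fin (2 * n) := ⟨n + i.1, by have := i.isLt; omega⟩

/-- x_{L_i-L_j}(t₁,t₂) = I + (t₁ e_{i,j} + t₂ e_{j+n,i+n}),  i ≠ j. -/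
def xpm (n : ℕ) (K : Type) [RCLike K] (i j : Fin n) (t₁ t₂ : K) : MK n K :=
  1 + (t₁ • EK n K (lo i) (lo j) + t₂ • EK n K (hi j) (hi i))

/-- x_{L_i+L_j}(t₁,t₂) = I + (t₁ e_{i,j+n} + t₂ e_{j,i+n}),  i < j. -/
def xpp (n : ℕ) (K : Type) [RCLike K] (i j : Fin n) (t₁ t₂ : K) : MK n K :=
  1 + (t₁ • EK n K (lo i) (hi j) + t₂ • EK n K (lo j) (hi i))

/-- x_{-L_i-L_j}(t₁,t₂) = I + (t₁ e_{j+n,i} + t₂ e_{i+n,j}),  i < j. -/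
def xmm (n : ℕ) (K : Type) [RCLike K] (i j : Fin n) (t₁ t₂ : K) : MK n K :=
  1 + (t₁ • EK n K (hi j) (lo i) + t₂ • EK n K (hi i) (lo j))

/-- x_{2L_i}(t) = I + t e_{i,i+n}. -/
def x2 (n : ℕ) (K : Type) [RCLike K] (i : Fin n) (t : K) : MK n K :=
  1 + t • EK n K (lo i) (hi i)

/-- x_{-2L_i}(t) = I + t e_{i+n,i}. -/
def xm2 (n : ℕ) (K : Type) [RCLike K] (i : Fin n) (t : K) : MK n K :=
  1 + t • EK n K (hi i) (lo i)

/-- w_{L_i-L_j}(t₁,t₂) = x_{L_i-L_j}(t₁,t₂) x_{L_j-L_i}(-t₁⁻¹,-t₂⁻¹) x_{L_i-L_j}(t₁,t₂).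
(Since 0⁻¹ = 0 in Lean, the degenerate forms w(t,0) and w(0,t) are special cases.) -/
def wpm (n : ℕ) (K : Type) [RCLike K] (i j : Fin n) (t₁ t₂ : K) : MK n K :=
  xpm n K i j t₁ t₂ * xpm n K j i (-t₁⁻¹) (-t₂⁻¹) * xpm n K i j t₁ t₂

/-- w_{L_i+L_j}(t₁,t₂). -/
def wpp (n : ℕ) (K : Type) [RCLike K] (i j : Fin n) (t₁ t₂ : K) : MK n K :=
  xpp n K i j t₁ t₂ * xmm n K i j (-t₁⁻¹) (-t₂⁻¹) * xpp n K i j t₁ t₂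

/-- w_{-L_i-L_j}(t₁,t₂). -/
def wmm (n : ℕ) (K : Type) [RCLike K] (i j : Fin n) (t₁ t₂ : K) : MK n K :=
  xmm n K i j t₁ t₂ * xpp n K i j (-t₁⁻¹) (-t₂⁻¹) * xmm n K i j t₁ t₂

/-- w_{2L_i}(t) = x_{2L_i}(t) x_{-2L_i}(-t⁻¹) x_{2L_i}(t). -/
def w2 (n : ℕ) (K : Type) [RCLike K] (i : Fin n) (t : K) : MK n K :=
  x2 n K i t * xm2 n K i (-t⁻¹) * x2 n K i t

/-- w_{-2L_i}(t) = x_{-2L_i}(t) x_{2L_i}(-t⁻¹) x_{-2L_i}(t). -/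
def wm2 (n : ℕ) (K : Type) [RCLike K] (i : Fin n) (t : K) : MK n K :=
  xm2 n K i t * x2 n K i (-t⁻¹) * xm2 n K i t

/-! The proof is a computation with monomial matrices. Each `w` in the statement swaps two
standard basis vectors up to scalars and fixes the others, and `w_{L_i-L_j}(t₁,t₂)` is the
product of two such commuting swaps, on `{i, j}` and on `{j+n, i+n}`. Conjugation by
`w_{L_i+L_j}(a,0)`, the swap of `i` and `j+n`, carries them to swaps on `{j+n, j}` and on
`{i, i+n}`, and the scalars are read off from two conjugation identities. -/

section WeylMatrix

variable {ι K : Type*} [Fintype ι] [DecidableEq ι] [Field K] {p q r s : ι}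

def weylMatrix (p q : ι) (c : K) : Matrix ι ι K :=
  1 - single p p 1 - single q q 1 + c • single p q 1 - c⁻¹ • single q p 1

omit [Fintype ι] in
lemma single_eq_smul_single_one (p q : ι) (c : K) : single p q c = c • single p q 1 := by
  rw [smul_single, smul_eq_mul, mul_one]

lemma transvection_mul_transvection_of_ne (hqr : q ≠ r) (c d : K) :
    transvection p q c * transvection r s d = 1 + (single p q c + single r s d) := by
  simp only [transvection, Matrix.mul_add, Matrix.add_mul, Matrix.one_mul, Matrix.mul_one,
    single_mul_single_of_ne, hqr, ne_eq, not_false_eq_true, add_zero, add_assoc]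

lemma commute_transvection (hqr : q ≠ r) (hsp : s ≠ p) (c d : K) :
    Commute (transvection p q c) (transvection r s d) := by
  rw [Commute, SemiconjBy, transvection_mul_transvection_of_ne hqr,
    transvection_mul_transvection_of_ne hsp, add_comm (single p q c)]

lemma transvection_mul_transvection_mul_transvection (hpq : p ≠ q) {c : K} (hc : c ≠ 0) :
    transvection p q c * transvection q p (-c⁻¹) * transvection p q c = weylMatrix p q c := by
  simp only [transvection, weylMatrix, single_eq_smul_single_one _ _ c,
    single_eq_smul_single_one _ _ (-c⁻¹)]
  simp only [Matrix.mul_add, Matrix.add_mul, Matrix.one_mul, smul_mul_assoc, mul_smul_comm,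
    single_mul_single_same, single_mul_single_of_ne, hpq.symm, ne_eq, not_false_eq_true,
    smul_zero, mul_one]
  match_scalars <;> simp [hc]

lemma weylMatrix_mul_weylMatrix_neg (hpq : p ≠ q) {c : K} (hc : c ≠ 0) :
    weylMatrix p q c * weylMatrix p q (-c) = 1 := by
  simp only [weylMatrix, Matrix.mul_add, Matrix.add_mul, Matrix.mul_sub, Matrix.sub_mul,
    Matrix.one_mul, smul_mul_assoc, mul_smul_comm,
    single_mul_single_same, single_mul_single_of_ne, hpq, hpq.symm, ne_eq, not_false_eq_true,
    smul_zero, mul_one]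
  match_scalars <;> field_simp <;> ring

lemma inv_weylMatrix (hpq : p ≠ q) {c : K} (hc : c ≠ 0) :
    (weylMatrix p q c)⁻¹ = weylMatrix p q (-c) :=
  Matrix.inv_eq_right_inv (weylMatrix_mul_weylMatrix_neg hpq hc)

lemma weylMatrix_conj_weylMatrix_of_source_eq (hpq : p ≠ q) (hpr : p ≠ r) (hqr : q ≠ r)
    {a : K} (ha : a ≠ 0) (t : K) :
    weylMatrix p q a * weylMatrix p r t * weylMatrix p q (-a) = weylMatrix q r (-(a⁻¹ * t)) := by
  simp only [weylMatrix, Matrix.mul_add, Matrix.add_mul, Matrix.mul_sub, Matrix.sub_mul,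
    Matrix.one_mul, smul_mul_assoc, mul_smul_comm,
    single_mul_single_same, single_mul_single_of_ne, hpq, hpq.symm, hpr, hpr.symm, hqr,
    hqr.symm, ne_eq, not_false_eq_true, smul_zero, mul_one, Matrix.zero_mul]
  match_scalars <;> field_simp <;> ring

lemma weylMatrix_conj_weylMatrix_of_target_eq_source (hpq : p ≠ q) (hpr : p ≠ r) (hqr : q ≠ r)
    {a : K} (ha : a ≠ 0) (t : K) :
    weylMatrix p q a * weylMatrix q r t * weylMatrix p q (-a) = weylMatrix p r (a * t) := by
  simp only [weylMatrix, Matrix.mul_add, Matrix.add_mul, Matrix.mul_sub, Matrix.sub_mul,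
    Matrix.one_mul, smul_mul_assoc, mul_smul_comm,
    single_mul_single_same, single_mul_single_of_ne, hpq, hpq.symm, hpr, hpr.symm, hqr,
    hqr.symm, ne_eq, not_false_eq_true, smul_zero, mul_one, Matrix.zero_mul]
  match_scalars <;> field_simp <;> ring

lemma mul_mul_conj_eq_conj_mul_conj {M : Type*} [Monoid M] {w w' x y : M} (h : w' * w = 1) :
    w * (x * y) * w' = w * x * w' * (w * y * w') := by
  simp only [mul_assoc, ← mul_assoc w' w, h, one_mul]

end WeylMatrix

lemma lo_injective {n : ℕ} : Function.Injective (lo (n := n)) := fun i j h => by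
  simpa [lo, Fin.ext_iff] using h

lemma hi_injective {n : ℕ} : Function.Injective (hi (n := n)) := fun i j h => by
  simpa [hi, Fin.ext_iff] using h

lemma lo_ne_hi {n : ℕ} (i j : Fin n) : lo i ≠ hi j := by
  simp only [lo, hi, ne_eq, Fin.ext_iff]
  omega

lemma smul_EK (n : ℕ) (K : Type) [RCLike K] (k l : Fin (2 * n)) (t : K) :
    t • EK n K k l = single k l t := by
  rw [EK, smul_single, smul_eq_mul, mul_one]

section ClosedForms

variable (n : ℕ) (K : Type) [RCLike K]

lemma xpm_eq (i j : Fin n) (t₁ t₂ : K) :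
    xpm n K i j t₁ t₂ = transvection (lo i) (lo j) t₁ * transvection (hi j) (hi i) t₂ := by
  rw [xpm, smul_EK, smul_EK, transvection_mul_transvection_of_ne (lo_ne_hi j j)]

lemma wpm_eq {i j : Fin n} (hij : i ≠ j) {t₁ t₂ : K} (h₁ : t₁ ≠ 0) (h₂ : t₂ ≠ 0) :
    wpm n K i j t₁ t₂ = weylMatrix (lo i) (lo j) t₁ * weylMatrix (hi j) (hi i) t₂ := by
  have hB : Commute (transvection (hi j) (hi i) t₂) (transvection (lo j) (lo i) (-t₁⁻¹)) :=
    commute_transvection (lo_ne_hi j i).symm (lo_ne_hi i j) _ _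
  have hBB' : Commute (transvection (hi j) (hi i) t₂ * transvection (hi i) (hi j) (-t₂⁻¹))
      (transvection (lo i) (lo j) t₁) :=
    (commute_transvection (lo_ne_hi i i).symm (lo_ne_hi j j) _ _).mul_left
      (commute_transvection (lo_ne_hi i j).symm (lo_ne_hi j i) _ _)
  rw [wpm, xpm_eq, xpm_eq, hB.mul_mul_mul_comm, hBB'.mul_mul_mul_comm,
    transvection_mul_transvection_mul_transvection (lo_injective.ne hij) h₁,
    transvection_mul_transvection_mul_transvection (hi_injective.ne hij.symm) h₂]

lemma wpp_eq (i j : Fin n) {a : K} (ha : a ≠ 0) :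
    wpp n K i j a 0 = weylMatrix (lo i) (hi j) a := by
  simp only [wpp, xpp, xmm, _root_.inv_zero, neg_zero, zero_smul, add_zero, smul_EK]
  exact transvection_mul_transvection_mul_transvection (lo_ne_hi i j) ha

lemma w2_eq (i : Fin n) {t : K} (ht : t ≠ 0) : w2 n K i t = weylMatrix (lo i) (hi i) t := by
  simp only [w2, x2, xm2, smul_EK]
  exact transvection_mul_transvection_mul_transvection (lo_ne_hi i i) ht

lemma wm2_eq (i : Fin n) {t : K} (ht : t ≠ 0) : wm2 n K i t = weylMatrix (hi i) (lo i) t := by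
  simp only [wm2, x2, xm2, smul_EK]
  exact transvection_mul_transvection_mul_transvection (lo_ne_hi i i).symm ht

end ClosedForms

theorem statement14_general {n : ℕ} (K : Type) [RCLike K]
    (i j : Fin n) (hij : i < j) (a t₁ t₂ : K) (ha : a ≠ 0) (h1 : t₁ ≠ 0) (h2 : t₂ ≠ 0) :
    wpp n K i j a 0 * wpm n K i j t₁ t₂ * (wpp n K i j a 0)⁻¹
      = wm2 n K j (-(a⁻¹ * t₁)) * w2 n K i (a * t₂) := by
  have hne : i ≠ j := hij.ne
  have hW : weylMatrix (lo i) (hi j) (-a) * weylMatrix (lo i) (hi j) a = 1 := by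
    simpa using weylMatrix_mul_weylMatrix_neg (lo_ne_hi i j) (neg_ne_zero.mpr ha)
  rw [wpp_eq n K i j ha, inv_weylMatrix (lo_ne_hi i j) ha, wpm_eq n K hne h1 h2,
    wm2_eq n K j (by simp [ha, h1]), w2_eq n K i (mul_ne_zero ha h2),
    mul_mul_conj_eq_conj_mul_conj hW,
    weylMatrix_conj_weylMatrix_of_source_eq (lo_ne_hi i j) (lo_injective.ne hne)
      (lo_ne_hi j j).symm ha,
    weylMatrix_conj_weylMatrix_of_target_eq_source (lo_ne_hi i j) (lo_ne_hi i i)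
      (hi_injective.ne hne.symm) ha]

/-- for i < j and nonzero a, t₁, t₂,
w_{L_i+L_j}(a,0) w_{L_i-L_j}(t₁,t₂) w_{L_i+L_j}(a,0)⁻¹ = w_{-2L_j}(-a⁻¹t₁) w_{2L_i}(a t₂). -/
theorem statement14 {n : ℕ} (hn : 2 ≤ n) (K : Type) [RCLike K]
    (i j : Fin n) (hij : i < j) (a t₁ t₂ : K) (ha : a ≠ 0) (h1 : t₁ ≠ 0) (h2 : t₂ ≠ 0) :
    wpp n K i j a 0 * wpm n K i j t₁ t₂ * (wpp n K i j a 0)⁻¹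
      = wm2 n K j (-(a⁻¹ * t₁)) * w2 n K i (a * t₂) :=
  statement14_general K i j hij a t₁ t₂ ha h1 h2

end
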